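/- arXiv:1112.3015 — 4 statements merged into one kernel-verified Lean document; each statement's English description precedes it below -/
import Mathlib

section
/- For every fixed positive integer i, the upper boundary function m ↦ m^(i) is weakly increasing on the nonnegative integers: for all nonnegative integers m₁ ≤ m₂ one has m₁^(i) ≤ m₂^(i). -/
/-- The upper `i`-boundary `m^(i)`, computed greedily from the unique binomial
representation `m = C(n_i,i) + C(n_{i-1},i-1) + ... + C(n_j,j)`
(with `n_i > n_{i-1} > ... > n_j ≥ j ≥ 1`) as
`m^(i) = C(n_i,i+1) + C(n_{i-1},i) + ... + C(n_j,j+1)`;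
by convention `0^(i) = 0`. -/
def ub : ℕ → ℕ → ℕ
  | 0, _ => 0
  | i + 1, m =>
    if m = 0 then 0
    else
      Nat.choose (Nat.findGreatest (fun t => Nat.choose t (i + 1) ≤ m) (m + i + 1)) (i + 2) +
        ub i (m - Nat.choose (Nat.findGreatest (fun t => Nat.choose t (i + 1) ≤ m) (m + i + 1)) (i + 1))

/-- Lower bound for binomial coefficients: `C(n+k+1, k+1) ≥ n+1`. -/
lemma choose_lower (n k : ℕ) : n + 1 ≤ (n + k + 1).choose (k + 1) := by
  induction n with
  | zero => simp [Nat.choose_self]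
  | succ n ih =>
    have h : (n + k + 1 + 1).choose (k + 1)
        = (n + k + 1).choose k + (n + k + 1).choose (k + 1) :=
      Nat.choose_succ_succ' _ _
    have hpos : 0 < (n + k + 1).choose k := Nat.choose_pos (by omega)
    have he : n + 1 + k + 1 = n + k + 1 + 1 := by omega
    rw [he]
    omega

/-- The greedy leading index used in `ub`. -/
noncomputable def gr (i m : ℕ) : ℕ :=
  Nat.findGreatest (fun t => Nat.choose t (i + 1) ≤ m) (m + i + 1)

lemma gr_le (i m : ℕ) : Nat.choose (gr i m) (i + 1) ≤ m :=
  Nat.findGreatest_spec (P := fun t => Nat.choose t (i + 1) ≤ m)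
    (Nat.zero_le _) (by simp)

lemma gr_lt (i m : ℕ) : m < Nat.choose (gr i m + 1) (i + 1) := by
  have hble : gr i m ≤ m + i + 1 := Nat.findGreatest_le _
  have hne : gr i m ≠ m + i + 1 := by
    intro h
    have h1 := gr_le i m
    rw [h] at h1
    have h2 := choose_lower m i
    omega
  have h1 : gr i m + 1 ≤ m + i + 1 := by omega
  have h2 := Nat.findGreatest_is_greatest (P := fun t => Nat.choose t (i + 1) ≤ m)
    (k := gr i m + 1) (Nat.lt_succ_self _) h1
  simpa using h2

lemma ub_eq (i m : ℕ) (hm : m ≠ 0) :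
    ub (i + 1) m = Nat.choose (gr i m) (i + 2) + ub i (m - Nat.choose (gr i m) (i + 1)) := by
  simp [ub, hm, gr]

/-- Key bound: if `m < C(N,i)` then `ub i m ≤ C(N,i+1)`. -/
lemma ub_bound : ∀ i m N : ℕ, m < Nat.choose N i → ub i m ≤ Nat.choose N (i + 1) := by
  intro i
  induction i with
  | zero => intro m N _; simp [ub]
  | succ i ih =>
    intro m N hm
    show ub (i + 1) m ≤ Nat.choose N (i + 2)
    rcases eq_or_ne m 0 with rfl | hm0
    · simp [ub]
    rw [ub_eq i m hm0]
    set n := gr i m with hn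
    have h1 : Nat.choose n (i + 1) ≤ m := gr_le i m
    have h2 : m < Nat.choose (n + 1) (i + 1) := gr_lt i m
    have hnN : n < N := by
      by_contra h
      have := Nat.choose_le_choose (i + 1) (show N ≤ n by omega)
      omega
    have hsum : Nat.choose (n + 1) (i + 1) = Nat.choose n i + Nat.choose n (i + 1) :=
      Nat.choose_succ_succ' _ _
    have hr : m - Nat.choose n (i + 1) < Nat.choose n i := by omega
    have h3 : ub i (m - Nat.choose n (i + 1)) ≤ Nat.choose n (i + 1) := ih _ _ hr
    have h4 : Nat.choose (n + 1) (i + 2) = Nat.choose n (i + 1) + Nat.choose n (i + 2) :=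
      Nat.choose_succ_succ' n (i + 1)
    have h5 : Nat.choose (n + 1) (i + 2) ≤ Nat.choose N (i + 2) :=
      Nat.choose_le_choose _ (by omega)
    omega

/-- for every fixed positive integer `i`, the upper boundary function
`m ↦ m^(i)` is weakly increasing on the nonnegative integers. -/
theorem ub_monotone (i : ℕ) (hi : 0 < i) :
    ∀ m₁ m₂ : ℕ, m₁ ≤ m₂ → ub i m₁ ≤ ub i m₂ := by
  clear hi
  induction i with
  | zero => intro m₁ m₂ _; simp [ub]
  | succ i ih =>
    intro m₁ m₂ h
    rcases eq_or_ne m₁ 0 with rfl | h1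
    · simp [ub]
    have h2 : m₂ ≠ 0 := by omega
    have hg1 : Nat.choose (gr i m₁) (i + 1) ≤ m₁ := gr_le i m₁
    have hb1 : gr i m₁ ≤ m₁ + i + 1 := Nat.findGreatest_le _
    have hle : gr i m₁ ≤ gr i m₂ :=
      Nat.le_findGreatest (by omega) (le_trans hg1 h)
    rcases eq_or_lt_of_le hle with heq | hlt
    · rw [ub_eq i m₁ h1, ub_eq i m₂ h2, ← heq]
      have hmono : m₁ - Nat.choose (gr i m₁) (i + 1) ≤ m₂ - Nat.choose (gr i m₁) (i + 1) :=
        Nat.sub_le_sub_right h _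
      exact Nat.add_le_add_left (ih _ _ hmono) _
    · have hA : ub (i + 1) m₁ ≤ Nat.choose (gr i m₁ + 1) (i + 2) :=
        ub_bound (i + 1) m₁ (gr i m₁ + 1) (gr_lt i m₁)
      have hB : Nat.choose (gr i m₁ + 1) (i + 2) ≤ Nat.choose (gr i m₂) (i + 2) :=
        Nat.choose_le_choose _ (by omega)
      have hC : Nat.choose (gr i m₂) (i + 2) ≤ ub (i + 1) m₂ := by
        rw [ub_eq i m₂ h2]; exact Nat.le_add_right _ _
      omega
end

section
/- For positive integers i and n with i < n, one has (C(n,i) − 1)^(i) = C(n,i)^(i) − (n − i) = C(n,i+1) − (n − i); in particular (C(n,i) − 1)^(i) < C(n,i)^(i). -/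
lemma choose_succ_top {a k : ℕ} (hk : 1 ≤ k) (hka : k - 1 ≤ a) :
    Nat.choose a k < Nat.choose (a+1) k := by
  obtain ⟨j, rfl⟩ : ∃ j, k = j + 1 := ⟨k - 1, (Nat.succ_pred_eq_of_pos hk).symm⟩
  rw [Nat.choose_succ_succ' a j]
  have : 0 < Nat.choose a j := Nat.choose_pos (by simpa using hka)
  omega

lemma choose_strict {k a b : ℕ} (hk : 1 ≤ k) (hka : k ≤ a) (hab : a < b) :
    Nat.choose a k < Nat.choose b k :=
  lt_of_lt_of_le (choose_succ_top hk (by omega)) (Nat.choose_le_choose k hab)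

lemma choose_lb {k n : ℕ} (hk : 1 ≤ k) (hkn : k ≤ n) : n - k + 1 ≤ Nat.choose n k := by
  obtain ⟨m, rfl⟩ := Nat.exists_eq_add_of_le hkn
  induction m with
  | zero => simp
  | succ m ih =>
    have h2 : Nat.choose (k+m) k < Nat.choose (k+m+1) k :=
      choose_succ_top hk (by omega)
    have : k + (m+1) = (k+m) + 1 := by ring
    rw [this]; omega

lemma fg_eq {k m g : ℕ} (hg : Nat.choose g k ≤ m) (hgb : g ≤ m + k)
    (hmax : ∀ t, g < t → ¬ Nat.choose t k ≤ m) :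
    Nat.findGreatest (fun t => Nat.choose t k ≤ m) (m + k) = g := by
  rw [Nat.findGreatest_eq_iff]
  exact ⟨hgb, fun _ => hg, fun t ht _ => hmax t ht⟩

lemma ub_zero (i : ℕ) : ub i 0 = 0 := by cases i <;> simp [ub]

lemma ub_choose (i n : ℕ) (hi : 1 ≤ i) (hin : i ≤ n) :
    ub i (Nat.choose n i) = Nat.choose n (i + 1) := by
  obtain ⟨i, rfl⟩ : ∃ j, i = j + 1 := ⟨i - 1, (Nat.succ_pred_eq_of_pos hi).symm⟩
  have hmpos : 0 < Nat.choose n (i + 1) := Nat.choose_pos hin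
  have hfg : Nat.findGreatest (fun t => Nat.choose t (i + 1) ≤ Nat.choose n (i + 1))
      (Nat.choose n (i + 1) + i + 1) = n := by
    have hlb : n - (i + 1) + 1 ≤ Nat.choose n (i + 1) := choose_lb (by omega) hin
    exact fg_eq le_rfl (by omega) (fun t ht => by
      simpa using choose_strict (k := i + 1) (by omega) hin ht)
  rw [ub, if_neg (by omega), hfg, Nat.sub_self, ub_zero]
  simp

lemma ub_choose_pred : ∀ i n : ℕ, 1 ≤ i → i < n →
    ub i (Nat.choose n i - 1) = Nat.choose n (i + 1) - (n - i)
  | 0, n, hi, _ => by omega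
  | i + 1, n, _, hin => by
    have hn1 : i + 1 ≤ n - 1 := by omega
    have hlb : n - (i + 1) + 1 ≤ Nat.choose n (i + 1) := choose_lb (by omega) (by omega)
    have hn : n - 1 + 1 = n := by omega
    have hpascal := Nat.choose_succ_succ (n - 1) i
    simp only [Nat.succ_eq_add_one, hn] at hpascal
    have hpos : 0 < Nat.choose (n - 1) i := Nat.choose_pos (by omega)
    have hm2 : 2 ≤ Nat.choose n (i + 1) := by omega
    set m := Nat.choose n (i + 1) - 1 with hm
    have hfg : Nat.findGreatest (fun t => Nat.choose t (i + 1) ≤ m) (m + i + 1) = n - 1 := by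
      refine fg_eq (by omega) (by omega) (fun t ht => ?_)
      have : Nat.choose n (i + 1) ≤ Nat.choose t (i + 1) :=
        Nat.choose_le_choose _ (by omega)
      omega
    have hrem : m - Nat.choose (n - 1) (i + 1) = Nat.choose (n - 1) i - 1 := by omega
    have hpascal2 := Nat.choose_succ_succ (n - 1) (i + 1)
    simp only [Nat.succ_eq_add_one, hn, show i + 1 + 1 = i + 2 from rfl] at hpascal2
    rw [ub, if_neg (by omega), hfg, hrem]
    show _ = Nat.choose n (i + 2) - (n - (i + 1))
    rcases Nat.eq_zero_or_pos i with rfl | hi1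
    · have h2 : Nat.choose (n - 1) 0 = 1 := Nat.choose_zero_right _
      have h1 : Nat.choose (n - 1) 1 = n - 1 := Nat.choose_one_right _
      simp only [ub]
      norm_num at hpascal2 ⊢
      omega
    · rcases Nat.lt_or_ge i (n - 1) with hlt | hge
      · have ih := ub_choose_pred i (n - 1) hi1 hlt
        have hlb2 : (n - 1) - (i + 1) + 1 ≤ Nat.choose (n - 1) (i + 1) :=
          choose_lb (by omega) hn1
        omega
      ·
        omega

/-- for positive integers `i < n`, one has
`(C(n,i) - 1)^(i) = C(n,i)^(i) - (n - i) = C(n,i+1) - (n - i)`;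
in particular `(C(n,i) - 1)^(i) < C(n,i)^(i)`. -/
theorem ub_choose_sub_one (i n : ℕ) (hi : 0 < i) (hin : i < n) :
    ub i (Nat.choose n i - 1) = ub i (Nat.choose n i) - (n - i) ∧
    ub i (Nat.choose n i) = Nat.choose n (i + 1) ∧
    ub i (Nat.choose n i - 1) < ub i (Nat.choose n i) := by
  have h2 := ub_choose i n hi (le_of_lt hin)
  have h1 := ub_choose_pred i n hi hin
  have hpos : 0 < Nat.choose n (i + 1) := Nat.choose_pos hin
  exact ⟨by omega, h2, by omega⟩
end

section
/- For all nonnegative integers m₁, m₂ and every positive integer i, the upper boundary function is superadditive: (m₁ + m₂)^(i) ≥ m₁^(i) + m₂^(i). -/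
namespace UBaux

lemma pascal (t k : ℕ) : Nat.choose (t + 1) (k + 1) = Nat.choose t k + Nat.choose t (k + 1) :=
  Nat.choose_succ_succ' t k

lemma choose_big (m i : ℕ) : m + 1 ≤ Nat.choose (m + i + 1) (i + 1) := by
  induction m with
  | zero => simp
  | succ m ih =>
    have h : 0 < Nat.choose (m + i + 1) i := Nat.choose_pos (by omega)
    have e : m + 1 + i + 1 = (m + i + 1) + 1 := by omega
    rw [e, pascal]
    omega

lemma ub_zero (i : ℕ) : ub i 0 = 0 := by cases i <;> simp [ub]

lemma ub_succ_eq {i n m : ℕ} (h0 : 0 < m) (h1 : Nat.choose n (i + 1) ≤ m)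
    (h2 : m < Nat.choose (n + 1) (i + 1)) :
    ub (i + 1) m = Nat.choose n (i + 2) + ub i (m - Nat.choose n (i + 1)) := by
  have hn : i + 1 ≤ n := by
    by_contra h
    push_neg at h
    have : Nat.choose (n + 1) (i + 1) ≤ Nat.choose (i + 1) (i + 1) :=
      Nat.choose_le_choose _ (by omega)
    simp at this
    omega
  have hfg : Nat.findGreatest (fun t => Nat.choose t (i + 1) ≤ m) (m + i + 1) = n := by
    rw [Nat.findGreatest_eq_iff]
    refine ⟨?_, fun _ => h1, fun k hk hk' => ?_⟩
    · by_contra h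
      push_neg at h
      have hb := choose_big m i
      have := Nat.choose_le_choose (i + 1) (show m + i + 1 ≤ n by omega)
      omega
    · simp only [not_le]
      calc m < Nat.choose (n + 1) (i + 1) := h2
        _ ≤ Nat.choose k (i + 1) := Nat.choose_le_choose _ (by omega)
  rw [ub, if_neg (by omega), hfg]

lemma exists_top (i : ℕ) {m : ℕ} (h0 : 0 < m) :
    ∃ t, i ≤ t ∧ Nat.choose (t + 1) (i + 1) ≤ m ∧ m < Nat.choose (t + 2) (i + 1) := by
  have hPi : Nat.choose (i + 1) (i + 1) ≤ m := by simp; omega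
  have hbd : i + 1 ≤ m + i + 1 := by omega
  have h1 : i + 1 ≤ Nat.findGreatest (fun t => Nat.choose t (i + 1) ≤ m) (m + i + 1) :=
    Nat.le_findGreatest (P := fun t => Nat.choose t (i + 1) ≤ m) hbd hPi
  have h2 : Nat.choose (Nat.findGreatest (fun t => Nat.choose t (i + 1) ≤ m) (m + i + 1)) (i + 1) ≤ m :=
    Nat.findGreatest_spec (P := fun t => Nat.choose t (i + 1) ≤ m) hbd hPi
  have hle : Nat.findGreatest (fun t => Nat.choose t (i + 1) ≤ m) (m + i + 1) ≤ m + i + 1 :=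
    Nat.findGreatest_le _
  obtain ⟨t, ht⟩ : ∃ t, Nat.findGreatest (fun t => Nat.choose t (i + 1) ≤ m) (m + i + 1) = t + 1 :=
    ⟨Nat.findGreatest (fun t => Nat.choose t (i + 1) ≤ m) (m + i + 1) - 1, by omega⟩
  rw [ht] at h1 h2 hle
  refine ⟨t, by omega, h2, ?_⟩
  by_cases hc : t + 2 ≤ m + i + 1
  · have := Nat.findGreatest_is_greatest (P := fun t => Nat.choose t (i + 1) ≤ m)
      (n := m + i + 1) (k := t + 2) (by omega) hc
    simp only [not_le] at this
    exact this
  · exfalso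
    have he : t + 1 = m + i + 1 := by omega
    have := choose_big m i
    rw [he] at h2
    omega

lemma ub_decomp (j t s : ℕ) (ht : j + 1 ≤ t) (hs : s < Nat.choose t j) :
    ub (j + 1) (Nat.choose t (j + 1) + s) = Nat.choose t (j + 2) + ub j s := by
  have h0 : 0 < Nat.choose t (j + 1) := Nat.choose_pos (by omega)
  have h2 : Nat.choose t (j + 1) + s < Nat.choose (t + 1) (j + 1) := by rw [pascal]; omega
  have := ub_succ_eq (i := j) (n := t) (m := Nat.choose t (j + 1) + s) (by omega)
    (Nat.le_add_right _ _) h2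
  simpa using this

lemma ub_choose (j t : ℕ) (ht : j + 1 ≤ t) :
    ub (j + 1) (Nat.choose t (j + 1)) = Nat.choose t (j + 2) := by
  have := ub_decomp j t 0 ht (Nat.choose_pos (by omega))
  simpa [ub_zero] using this

lemma ub_one_eq (m : ℕ) : ub 1 m = Nat.choose m 2 := by
  rcases Nat.eq_zero_or_pos m with rfl | h0
  · simp [ub_zero]
  · have := ub_succ_eq (i := 0) (n := m) (m := m) h0 (by simp) (by simp)
    simpa [ub_zero] using this


lemma ub_mono (i : ℕ) : Monotone (ub i) := by
  induction i with
  | zero => intro a b _; simp [ub]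
  | succ j ih =>
    apply monotone_nat_of_le_succ
    intro m
    rcases Nat.eq_zero_or_pos m with rfl | h0
    · rw [ub_zero]; exact Nat.zero_le _
    · obtain ⟨t, ht, h1, h2⟩ := exists_top j h0
      rcases lt_or_eq_of_le (show m + 1 ≤ Nat.choose (t + 2) (j + 1) by omega) with hlt | heq
      · rw [ub_succ_eq h0 h1 h2, ub_succ_eq (by omega) (by omega) hlt]
        have := ih (show m - Nat.choose (t + 1) (j + 1) ≤ m + 1 - Nat.choose (t + 1) (j + 1) by omega)
        omega
      · rw [ub_succ_eq h0 h1 h2, heq, ub_choose j (t + 2) (by omega)]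
        -- goal: C(t+1,j+2) + ub j (m - C(t+1,j+1)) ≤ C(t+2,j+2)
        have hp1 : Nat.choose (t + 2) (j + 2) = Nat.choose (t + 1) (j + 1) + Nat.choose (t + 1) (j + 2) := pascal _ _
        have hp2 : Nat.choose (t + 2) (j + 1) = Nat.choose (t + 1) j + Nat.choose (t + 1) (j + 1) := pascal _ _
        have hq : m - Nat.choose (t + 1) (j + 1) ≤ Nat.choose (t + 1) j := by omega
        have hub : ub j (m - Nat.choose (t + 1) (j + 1)) ≤ Nat.choose (t + 1) (j + 1) := by
          rcases j with _ | k
          · simp [ub]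
          · calc ub (k + 1) (m - Nat.choose (t + 1) (k + 2)) ≤ ub (k + 1) (Nat.choose (t + 1) (k + 1)) := ih hq
              _ = Nat.choose (t + 1) (k + 2) := ub_choose k (t + 1) (by omega)
        omega

def mu : ℕ → ℕ → ℕ
  | 0, _ => 0
  | 1, m => min 1 m
  | (j + 2), m => Nat.find (⟨m, Nat.le_add_right m (ub (j + 1) m)⟩ : ∃ K, m ≤ K + ub (j + 1) K)

def tau (i m : ℕ) : ℕ := m - mu i m

lemma mu_spec (j m : ℕ) : m ≤ mu (j + 2) m + ub (j + 1) (mu (j + 2) m) :=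
  Nat.find_spec (⟨m, Nat.le_add_right m (ub (j + 1) m)⟩ : ∃ K, m ≤ K + ub (j + 1) K)

lemma mu_min (j m k : ℕ) (h : k < mu (j + 2) m) : k + ub (j + 1) k < m := by
  have := Nat.find_min (⟨m, Nat.le_add_right m (ub (j + 1) m)⟩ : ∃ K, m ≤ K + ub (j + 1) K) h
  omega

lemma mu_le (j m K : ℕ) (h : m ≤ K + ub (j + 1) K) : mu (j + 2) m ≤ K :=
  Nat.find_le h

lemma mu_le_self (i m : ℕ) : mu i m ≤ m := by
  match i with
  | 0 => simp [mu]
  | 1 => simp [mu]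
  | (j + 2) => exact mu_le j m m (Nat.le_add_right _ _)

lemma mu_one (m : ℕ) : mu 1 m = min 1 m := rfl

-- unified lemmas about mu (j+1) (so j = level of ub used "inside")
lemma muA (j ρ : ℕ) (h : 0 < j ∨ mu (j + 1) ρ = 0) :
    ρ ≤ mu (j + 1) ρ + ub j (mu (j + 1) ρ) := by
  match j with
  | 0 =>
    rcases h with h | h
    · omega
    · rw [mu_one] at h ⊢
      simp [ub, show ρ = 0 by omega]
  | (k + 1) => exact mu_spec k ρ

lemma muB (j ρ s : ℕ) (h : s < mu (j + 1) ρ) : s + ub j s < ρ := by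
  match j with
  | 0 =>
    rw [mu_one] at h
    have hs : s = 0 := by omega
    have : 0 < ρ := by omega
    simp [hs, ub]
    omega
  | (k + 1) => exact mu_min k ρ s h
lemma mu_decomp (j t m : ℕ) (ht : j + 1 ≤ t) (h1 : Nat.choose (t + 1) (j + 2) ≤ m)
    (h2 : m < Nat.choose (t + 2) (j + 2)) :
    mu (j + 2) m = Nat.choose t (j + 1) + mu (j + 1) (m - Nat.choose (t + 1) (j + 2)) := by
  set ρ := m - Nat.choose (t + 1) (j + 2) with hρdef
  have hm : m = Nat.choose (t + 1) (j + 2) + ρ := by omega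
  have pas2 : Nat.choose (t + 2) (j + 2)
      = Nat.choose (t + 1) (j + 1) + Nat.choose (t + 1) (j + 2) := pascal (t + 1) (j + 1)
  have pas1 : Nat.choose (t + 1) (j + 1) = Nat.choose t j + Nat.choose t (j + 1) := pascal t j
  have pas1' : Nat.choose (t + 1) (j + 2) = Nat.choose t (j + 1) + Nat.choose t (j + 2) :=
    pascal t (j + 1)
  have hρ : ρ < Nat.choose (t + 1) (j + 1) := by omega
  set u := mu (j + 1) ρ with hudef
  have hu_le : u ≤ Nat.choose t j := by
    rcases j with _ | k
    · rw [hudef, mu_one]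
      have : Nat.choose t 0 = 1 := Nat.choose_zero_right t
      omega
    · have hv : ub (k + 1) (Nat.choose t (k + 1)) = Nat.choose t (k + 2) :=
        ub_choose k t (by omega)
      have hρ' : ρ < Nat.choose (t + 1) (k + 2) := hρ
      have hp : Nat.choose (t + 1) (k + 2) = Nat.choose t (k + 1) + Nat.choose t (k + 2) :=
        pascal t (k + 1)
      exact mu_le k ρ _ (by omega)
  have key1 : m ≤ (Nat.choose t (j + 1) + u) + ub (j + 1) (Nat.choose t (j + 1) + u) := by
    rcases eq_or_lt_of_le hu_le with he | hlt
    · rw [he]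
      have hsum : Nat.choose t (j + 1) + Nat.choose t j = Nat.choose (t + 1) (j + 1) := by omega
      rw [hsum]
      have hub : ub (j + 1) (Nat.choose (t + 1) (j + 1)) = Nat.choose (t + 1) (j + 2) :=
        ub_choose j (t + 1) (by omega)
      omega
    · have hA : ρ ≤ u + ub j u := by
        apply muA
        rcases j with _ | k
        · right
          have h1' : u < 1 := by simpa using hlt
          omega
        · left; omega
      rw [ub_decomp j t u ht hlt]
      omega
  have key2 : ∀ r, r < Nat.choose t (j + 1) + u → r + ub (j + 1) r < m := by
    intro r hr
    rcases lt_or_ge r (Nat.choose t (j + 1)) with hc | hc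
    · have h3 : ub (j + 1) r ≤ ub (j + 1) (Nat.choose t (j + 1)) := ub_mono (j + 1) hc.le
      have h4 : ub (j + 1) (Nat.choose t (j + 1)) = Nat.choose t (j + 2) := ub_choose j t ht
      omega
    · obtain ⟨s, rfl⟩ : ∃ s, r = Nat.choose t (j + 1) + s := ⟨r - Nat.choose t (j + 1), by omega⟩
      have hs : s < u := by omega
      have hslt : s < Nat.choose t j := lt_of_lt_of_le hs hu_le
      rw [ub_decomp j t s ht hslt]
      have hB := muB j ρ s hs
      omega
  have hle : mu (j + 2) m ≤ Nat.choose t (j + 1) + u := mu_le _ _ _ key1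
  have hge : Nat.choose t (j + 1) + u ≤ mu (j + 2) m := by
    by_contra hcon
    push_neg at hcon
    have hk := key2 (mu (j + 2) m) hcon
    have := mu_spec j m
    omega
  omega

lemma tau_decomp (j t m : ℕ) (ht : j + 1 ≤ t) (h1 : Nat.choose (t + 1) (j + 2) ≤ m)
    (h2 : m < Nat.choose (t + 2) (j + 2)) :
    tau (j + 2) m = Nat.choose t (j + 2) + tau (j + 1) (m - Nat.choose (t + 1) (j + 2)) := by
  have hmu := mu_decomp j t m ht h1 h2
  have hles := mu_le_self (j + 1) (m - Nat.choose (t + 1) (j + 2))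
  have pas1' : Nat.choose (t + 1) (j + 2) = Nat.choose t (j + 1) + Nat.choose t (j + 2) :=
    pascal t (j + 1)
  simp only [tau, hmu]
  omega

lemma tau_lt (j : ℕ) : ∀ t m : ℕ, j + 1 ≤ t → m < Nat.choose (t + 1) (j + 1) →
    tau (j + 1) m < Nat.choose t (j + 1) := by
  induction j with
  | zero =>
    intro t m ht hm
    have hm' : m < Nat.choose (t + 1) 1 := hm
    rw [Nat.choose_one_right] at hm'
    show tau 1 m < Nat.choose t 1
    rw [Nat.choose_one_right]
    simp only [tau, mu_one]
    omega
  | succ j ihj =>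
    intro t m ht hm
    show tau (j + 2) m < Nat.choose t (j + 2)
    rcases Nat.eq_zero_or_pos m with rfl | h0
    · have h : tau (j + 2) 0 = 0 := by simp [tau]
      rw [h]
      exact Nat.choose_pos (by omega)
    · obtain ⟨t', ht', h1, h2⟩ := exists_top (j + 1) h0
      have h1' : Nat.choose (t' + 1) (j + 2) ≤ m := h1
      have h2' : m < Nat.choose (t' + 2) (j + 2) := h2
      clear h1 h2
      have hm' : m < Nat.choose (t + 1) (j + 2) := hm
      clear hm
      have htt : t' + 1 ≤ t := by
        by_contra hcon
        push_neg at hcon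
        have hmono : Nat.choose (t + 1) (j + 2) ≤ Nat.choose (t' + 1) (j + 2) :=
          Nat.choose_le_choose _ (by omega)
        omega
      rw [tau_decomp j t' m ht' h1' h2']
      have pas2 : Nat.choose (t' + 2) (j + 2)
          = Nat.choose (t' + 1) (j + 1) + Nat.choose (t' + 1) (j + 2) := pascal (t' + 1) (j + 1)
      have hρ : m - Nat.choose (t' + 1) (j + 2) < Nat.choose (t' + 1) (j + 1) := by omega
      have IH := ihj t' (m - Nat.choose (t' + 1) (j + 2)) (by omega) hρ
      have pas1' : Nat.choose (t' + 1) (j + 2) = Nat.choose t' (j + 1) + Nat.choose t' (j + 2) :=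
        pascal t' (j + 1)
      have mono : Nat.choose (t' + 1) (j + 2) ≤ Nat.choose t (j + 2) :=
        Nat.choose_le_choose _ htt
      omega

lemma ub_tau (j : ℕ) : ∀ m, ub (j + 1) m = tau (j + 1) m + ub (j + 1) (tau (j + 1) m) := by
  induction j with
  | zero =>
    intro m
    rcases Nat.eq_zero_or_pos m with rfl | h0
    · have h : tau 1 0 = 0 := by simp [tau]
      rw [h, ub_zero]
    · obtain ⟨m', rfl⟩ : ∃ m', m = m' + 1 := ⟨m - 1, by omega⟩
      have htau : tau 1 (m' + 1) = m' := by simp [tau, mu_one]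
      rw [htau, ub_one_eq, ub_one_eq]
      have hp : Nat.choose (m' + 1) 2 = Nat.choose m' 1 + Nat.choose m' 2 := pascal m' 1
      have he : Nat.choose m' 1 = m' := Nat.choose_one_right _
      omega
  | succ j ihj =>
    intro m
    show ub (j + 2) m = tau (j + 2) m + ub (j + 2) (tau (j + 2) m)
    rcases Nat.eq_zero_or_pos m with rfl | h0
    · have h : tau (j + 2) 0 = 0 := by simp [tau]
      rw [h, ub_zero]
    · obtain ⟨t, ht, h1, h2⟩ := exists_top (j + 1) h0
      have h1' : Nat.choose (t + 1) (j + 2) ≤ m := h1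
      have h2' : m < Nat.choose (t + 2) (j + 2) := h2
      clear h1 h2
      have pas2 : Nat.choose (t + 2) (j + 2)
          = Nat.choose (t + 1) (j + 1) + Nat.choose (t + 1) (j + 2) := pascal (t + 1) (j + 1)
      have hρ : m - Nat.choose (t + 1) (j + 2) < Nat.choose (t + 1) (j + 1) := by omega
      have hdec : ub (j + 2) (Nat.choose (t + 1) (j + 2) + (m - Nat.choose (t + 1) (j + 2)))
          = Nat.choose (t + 1) (j + 3) + ub (j + 1) (m - Nat.choose (t + 1) (j + 2)) :=
        ub_decomp (j + 1) (t + 1) (m - Nat.choose (t + 1) (j + 2)) (by omega) hρ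
      have hm' : Nat.choose (t + 1) (j + 2) + (m - Nat.choose (t + 1) (j + 2)) = m := by omega
      rw [hm'] at hdec
      have htau := tau_decomp j t m ht h1' h2'
      have htl : tau (j + 1) (m - Nat.choose (t + 1) (j + 2)) < Nat.choose t (j + 1) :=
        tau_lt j t _ ht hρ
      have hIH := ihj (m - Nat.choose (t + 1) (j + 2))
      rcases lt_or_ge (j + 1) t with hbig | hsmall
      · have hdec2 : ub (j + 2) (Nat.choose t (j + 2) + tau (j + 1) (m - Nat.choose (t + 1) (j + 2)))
            = Nat.choose t (j + 3) + ub (j + 1) (tau (j + 1) (m - Nat.choose (t + 1) (j + 2))) :=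
          ub_decomp (j + 1) t (tau (j + 1) (m - Nat.choose (t + 1) (j + 2))) (by omega) htl
        rw [htau, hdec2, hdec]
        have pas3 : Nat.choose (t + 1) (j + 3) = Nat.choose t (j + 2) + Nat.choose t (j + 3) :=
          pascal t (j + 2)
        omega
      · have hteq : t = j + 1 := by omega
        have hz1 : Nat.choose t (j + 2) = 0 := Nat.choose_eq_zero_of_lt (by omega)
        have hz2 : Nat.choose (t + 1) (j + 3) = 0 := Nat.choose_eq_zero_of_lt (by omega)
        have hone : Nat.choose t (j + 1) = 1 := by rw [hteq]; exact Nat.choose_self _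
        have hτ0 : tau (j + 1) (m - Nat.choose (t + 1) (j + 2)) = 0 := by omega
        rw [htau, hτ0, hz1]
        rw [hτ0, ub_zero] at hIH
        rw [hdec, hz2, hIH]
        simp [ub_zero]
lemma mu_subadd (j m₁ m₂ : ℕ) (hsup : ∀ a b, ub j a + ub j b ≤ ub j (a + b)) :
    mu (j + 1) (m₁ + m₂) ≤ mu (j + 1) m₁ + mu (j + 1) m₂ := by
  rcases j with _ | k
  · show mu 1 (m₁ + m₂) ≤ mu 1 m₁ + mu 1 m₂
    simp only [mu_one]
    omega
  · show mu (k + 2) (m₁ + m₂) ≤ mu (k + 2) m₁ + mu (k + 2) m₂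
    have s1 := mu_spec k m₁
    have s2 := mu_spec k m₂
    have hs := hsup (mu (k + 2) m₁) (mu (k + 2) m₂)
    apply mu_le
    omega

lemma tau_superadd (j m₁ m₂ : ℕ) (hsup : ∀ a b, ub j a + ub j b ≤ ub j (a + b)) :
    tau (j + 1) m₁ + tau (j + 1) m₂ ≤ tau (j + 1) (m₁ + m₂) := by
  have h := mu_subadd j m₁ m₂ hsup
  have l1 := mu_le_self (j + 1) m₁
  have l2 := mu_le_self (j + 1) m₂
  simp only [tau]
  omega

lemma tau_lt_self (j m : ℕ) (h0 : 0 < m) : tau (j + 1) m < m := by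
  rcases j with _ | k
  · show tau 1 m < m
    simp only [tau, mu_one]
    omega
  · show tau (k + 2) m < m
    have hpos : 0 < mu (k + 2) m := by
      by_contra h
      push_neg at h
      have hs := mu_spec k m
      have hz : mu (k + 2) m = 0 := by omega
      rw [hz, ub_zero] at hs
      omega
    have := mu_le_self (k + 2) m
    simp only [tau]
    omega

lemma ub_superadd (i : ℕ) : ∀ m₁ m₂ : ℕ, ub i m₁ + ub i m₂ ≤ ub i (m₁ + m₂) := by
  induction i with
  | zero => intro m₁ m₂; simp [ub]
  | succ j ih =>
    suffices H : ∀ N m₁ m₂, m₁ + m₂ ≤ N → ub (j + 1) m₁ + ub (j + 1) m₂ ≤ ub (j + 1) (m₁ + m₂) by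
      intro m₁ m₂
      exact H (m₁ + m₂) m₁ m₂ le_rfl
    intro N
    induction N with
    | zero =>
      intro m₁ m₂ h
      have h1 : m₁ = 0 := by omega
      have h2 : m₂ = 0 := by omega
      subst h1; subst h2
      simp [ub_zero]
    | succ N ihN =>
      intro m₁ m₂ hN
      rcases Nat.eq_zero_or_pos m₁ with rfl | h1
      · simp [ub_zero]
      rcases Nat.eq_zero_or_pos m₂ with rfl | h2
      · simp [ub_zero]
      have ht1 := ub_tau j m₁
      have ht2 := ub_tau j m₂
      have htM := ub_tau j (m₁ + m₂)
      have hts := tau_superadd j m₁ m₂ ih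
      have hl1 := tau_lt_self j m₁ h1
      have hl2 := tau_lt_self j m₂ h2
      have hmono : ub (j + 1) (tau (j + 1) m₁ + tau (j + 1) m₂)
          ≤ ub (j + 1) (tau (j + 1) (m₁ + m₂)) := ub_mono (j + 1) hts
      have hrec := ihN (tau (j + 1) m₁) (tau (j + 1) m₂) (by omega)
      omega

end UBaux

/-- for all nonnegative integers `m₁, m₂` and every positive integer `i`,
the upper boundary function is superadditive: `(m₁ + m₂)^(i) ≥ m₁^(i) + m₂^(i)`. -/
theorem ub_superadditive (i m₁ m₂ : ℕ) (hi : 0 < i) :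
    ub i m₁ + ub i m₂ ≤ ub i (m₁ + m₂) :=
  UBaux.ub_superadd i m₁ m₂
end

section
/- For every integer k ≥ 2 and every integer n with 1 ≤ n ≤ 2^k, one has φ_k(n) ≤ max over all decompositions n = n₀ + n₁ with 0 ≤ n₀, n₁ ≤ 2^{k−1} of the quantity min(φ_{k−1}(n₀), n₁) + min(φ_{k−1}(n₁), n₀), where φ_{k−1}(0) := 0. -/
open scoped Classical in
/-- The `k`-dimensional hypercube graph `Q_k`: vertices are the binary strings
`{0,1}^k` (modelled as `Fin k → Bool`), two vertices being adjacent iff they differ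
in exactly one coordinate. -/
noncomputable def Qcube (k : ℕ) : SimpleGraph (Fin k → Bool) :=
  SimpleGraph.fromRel fun x y =>
    (Finset.univ.filter fun j : Fin k => x j ≠ y j).card = 1

open scoped Classical in
/-- The number of full vertices (vertices of degree `k`) of the subgraph of `Q_k`
induced by the vertex set `S`. -/
noncomputable def fullCount (k : ℕ) (S : Finset (Fin k → Bool)) : ℕ :=
  (S.filter fun v => (S.filter fun w => (Qcube k).Adj v w).card = k).card

open scoped Classical in
/-- `phi k n` is the maximum, over all sets `S ⊆ {0,1}^k` with `|S| = n`, of the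
number of full vertices of the induced subgraph `Q_k[S]` (with `phi k 0 = 0`). -/
noncomputable def phi (k n : ℕ) : ℕ :=
  ((Finset.univ : Finset (Fin k → Bool)).powersetCard n).sup (fullCount k)

open Finset Function

open scoped Classical

lemma qcube_adj {k : ℕ} {v w : Fin k → Bool} :
    (Qcube k).Adj v w ↔ ∃ j, w = Function.update v j (!(v j)) := by
  have hfe : (Finset.univ.filter fun j : Fin k => w j ≠ v j)
      = (Finset.univ.filter fun j : Fin k => v j ≠ w j) := by
    apply Finset.filter_congr; intro j _; simp [ne_comm]
  rw [Qcube, SimpleGraph.fromRel_adj]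
  constructor
  · rintro ⟨hne, h⟩
    replace h : (Finset.univ.filter fun j : Fin k => v j ≠ w j).card = 1 := by
      rcases h with h | h
      · exact h
      · rwa [hfe] at h
    · obtain ⟨j, hj⟩ := Finset.card_eq_one.mp h
      refine ⟨j, funext fun i => ?_⟩
      by_cases hij : i = j
      · subst hij
        have hmem : i ∈ Finset.univ.filter fun j : Fin k => v j ≠ w j := by
          rw [hj]; exact Finset.mem_singleton_self i
        have hvi : v i ≠ w i := by simpa using hmem
        rw [Function.update_self]
        cases hv : v i <;> cases hw : w i <;> simp_all
      · have : v i = w i := by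
          by_contra hne'
          have : i ∈ ({j} : Finset (Fin k)) := by
            rw [← hj]; simp [hne']
          simp only [Finset.mem_singleton] at this
          exact hij this
        rw [Function.update_of_ne hij]; exact this.symm
  · rintro ⟨j, rfl⟩
    have hne : v ≠ Function.update v j (!(v j)) := by
      intro heq
      have := congrFun heq j
      simp at this
    refine ⟨hne, Or.inl ?_⟩
    rw [Finset.card_eq_one]
    refine ⟨j, ?_⟩
    ext i
    by_cases hij : i = j
    · subst hij; simp
    · simp [hij, Function.update_of_ne hij]

lemma full_iff {k : ℕ} {S : Finset (Fin k → Bool)} {v : Fin k → Bool} :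
    (S.filter fun w => (Qcube k).Adj v w).card = k ↔
      ∀ j, Function.update v j (!(v j)) ∈ S := by
  have hinj : Function.Injective (fun j : Fin k => Function.update v j (!(v j))) := by
    intro i j h
    by_contra hij
    have := congrFun h i
    dsimp only at this
    rw [Function.update_self, Function.update_of_ne hij] at this
    simp at this
  have himg : S.filter (fun w => (Qcube k).Adj v w)
      = (Finset.univ.filter fun j : Fin k => Function.update v j (!(v j)) ∈ S).image
          (fun j => Function.update v j (!(v j))) := by
    ext w
    simp only [Finset.mem_filter, Finset.mem_image, Finset.mem_univ, true_and, qcube_adj]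
    constructor
    · rintro ⟨hw, j, rfl⟩; exact ⟨j, hw, rfl⟩
    · rintro ⟨j, hj, rfl⟩; exact ⟨hj, j, rfl⟩
  rw [himg, Finset.card_image_of_injective _ hinj]
  constructor
  · intro h j
    have huniv : (Finset.univ.filter fun j : Fin k => Function.update v j (!(v j)) ∈ S)
        = Finset.univ := Finset.eq_univ_of_card _ (by simpa using h)
    have : j ∈ Finset.univ.filter fun j : Fin k => Function.update v j (!(v j)) ∈ S := by
      rw [huniv]; exact Finset.mem_univ j
    simpa using this
  · intro h
    rw [Finset.filter_true_of_mem fun j _ => h j]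
    simp

lemma fullCount_eq (k : ℕ) (S : Finset (Fin k → Bool)) :
    fullCount k S = (S.filter fun v => ∀ j, Function.update v j (!(v j)) ∈ S).card := by
  unfold fullCount
  congr 1
  apply Finset.filter_congr
  intro v _
  exact full_iff

lemma cons_mem_slice {m : ℕ} (v : Fin (m+1) → Bool) (b : Bool) (hb : v 0 = b) :
    Fin.cons b (Fin.tail v) = v := by
  rw [← hb]; exact Fin.cons_self_tail v

/-- for every `k ≥ 2` and `1 ≤ n ≤ 2^k`, `φ_k(n)` is at most the
maximum over all decompositions `n = n₀ + n₁` with `0 ≤ n₀, n₁ ≤ 2^{k-1}` of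
`min(φ_{k-1}(n₀), n₁) + min(φ_{k-1}(n₁), n₀)` (with `φ_{k-1}(0) = 0`); equivalently,
some such decomposition achieves at least `φ_k(n)`. -/
theorem phi_le_maximin (k n : ℕ) (hk : 2 ≤ k) (h1 : 1 ≤ n) (h2 : n ≤ 2 ^ k) :
    ∃ n₀ n₁ : ℕ, n₀ + n₁ = n ∧ n₀ ≤ 2 ^ (k - 1) ∧ n₁ ≤ 2 ^ (k - 1) ∧
      phi k n ≤ min (phi (k - 1) n₀) n₁ + min (phi (k - 1) n₁) n₀ := by
  obtain ⟨m, rfl⟩ : ∃ m, k = m + 1 := ⟨k - 1, by omega⟩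
  simp only [Nat.add_sub_cancel]
  have hcard : n ≤ (Finset.univ : Finset (Fin (m+1) → Bool)).card := by
    rw [Finset.card_univ]
    simpa using h2
  obtain ⟨S, hSmem, hSsup⟩ := Finset.exists_mem_eq_sup _
    (Finset.powersetCard_nonempty.mpr hcard) (fullCount (m+1))
  rw [Finset.mem_powersetCard] at hSmem
  obtain ⟨-, hScard⟩ := hSmem
  -- slices
  set S₀ : Finset (Fin m → Bool) :=
    Finset.univ.filter (fun x => Fin.cons false x ∈ S) with hS₀
  set S₁ : Finset (Fin m → Bool) :=
    Finset.univ.filter (fun x => Fin.cons true x ∈ S) with hS₁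
  have slice_card : ∀ b : Bool,
      (Finset.univ.filter (fun x : Fin m → Bool => Fin.cons b x ∈ S)).card
      = (S.filter fun v => v 0 = b).card := by
    intro b
    apply Finset.card_bij' (fun x _ => (Fin.cons b x : Fin (m+1) → Bool)) (fun v _ => (Fin.tail v : Fin m → Bool))
    · intro x hx
      simp only [Finset.mem_filter, Finset.mem_univ, true_and] at hx
      simp [hx]
    · intro v hv
      simp only [Finset.mem_filter] at hv
      simp only [Finset.mem_filter, Finset.mem_univ, true_and]
      rw [cons_mem_slice v b hv.2]
      exact hv.1
    · intro x _; simp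
    · intro v hv
      simp only [Finset.mem_filter] at hv
      exact cons_mem_slice v b hv.2
  refine ⟨S₀.card, S₁.card, ?_, ?_, ?_, ?_⟩
  · rw [hS₀, hS₁, slice_card false, slice_card true, ← hScard]
    have hneg : (S.filter fun v => ¬ v 0 = false) = S.filter fun v => v 0 = true := by
      apply Finset.filter_congr; intro v _; simp
    conv_rhs => rw [← Finset.card_filter_add_card_filter_not (s := S)
      (p := fun v => v 0 = false)]
    rw [hneg]
  · exact (Finset.card_filter_le _ _).trans (by simp)
  · exact (Finset.card_filter_le _ _).trans (by simp)
  · -- main inequality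
    rw [phi, hSsup, fullCount_eq]
    set F : Finset (Fin (m+1) → Bool) :=
      S.filter fun v => ∀ j, Function.update v j (!(v j)) ∈ S with hF
    have hFsplit : F.card = (F.filter fun v => v 0 = false).card
        + (F.filter fun v => v 0 = true).card := by
      have hneg : (F.filter fun v => ¬ v 0 = false) = F.filter fun v => v 0 = true := by
        apply Finset.filter_congr; intro v _; simp
      conv_lhs => rw [← Finset.card_filter_add_card_filter_not (s := F)
        (p := fun v => v 0 = false)]
      rw [hneg]
    rw [hFsplit]
    have key : ∀ b : Bool,
        (F.filter fun v => v 0 = b).card ≤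
          min (fullCount m (Finset.univ.filter (fun x : Fin m → Bool => Fin.cons b x ∈ S)))
            (Finset.univ.filter (fun x : Fin m → Bool => Fin.cons (!b) x ∈ S)).card := by
      intro b
      have htailinj : Set.InjOn Fin.tail ((F.filter fun v => v 0 = b) : Set (Fin (m+1) → Bool)) := by
        intro x hx y hy hxy
        simp only [Finset.coe_filter, Set.mem_setOf_eq] at hx hy
        rw [← cons_mem_slice x b hx.2, ← cons_mem_slice y b hy.2, hxy]
      apply le_min
      · -- into full set of slice b
        rw [fullCount_eq]
        apply Finset.card_le_card_of_injOn Fin.tail _ htailinj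
        intro v hv
        simp only [hF, Finset.mem_coe, Finset.mem_filter] at hv
        obtain ⟨⟨hvS, hvfull⟩, hv0⟩ := hv
        simp only [Finset.mem_coe, Finset.mem_filter, Finset.mem_univ, true_and]
        refine ⟨?_, ?_⟩
        · rw [cons_mem_slice v b hv0]; exact hvS
        · intro j
          have := hvfull j.succ
          have heq : Fin.cons b (Function.update (Fin.tail v) j (!(Fin.tail v j)))
              = Function.update v j.succ (!(v j.succ)) := by
            rw [Fin.cons_update, cons_mem_slice v b hv0]
            rfl
          rw [heq]
          exact this
      · -- into slice !b
        apply Finset.card_le_card_of_injOn Fin.tail _ htailinj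
        intro v hv
        simp only [hF, Finset.mem_coe, Finset.mem_filter] at hv
        obtain ⟨⟨hvS, hvfull⟩, hv0⟩ := hv
        simp only [Finset.mem_coe, Finset.mem_filter, Finset.mem_univ, true_and]
        have := hvfull 0
        have heq : Fin.cons (!b) (Fin.tail v) = Function.update v 0 (!(v 0)) := by
          rw [← cons_mem_slice v b hv0, Fin.update_cons_zero]
          simp
        rw [heq]
        exact this
    have hphi : ∀ b : Bool,
        fullCount m (Finset.univ.filter (fun x : Fin m → Bool => Fin.cons b x ∈ S))
          ≤ phi m (Finset.univ.filter (fun x : Fin m → Bool => Fin.cons b x ∈ S)).card := by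
      intro b
      apply Finset.le_sup
      rw [Finset.mem_powersetCard]
      exact ⟨Finset.subset_univ _, rfl⟩
    have h0 := (key false).trans (min_le_min (hphi false) le_rfl)
    have h1' := (key true).trans (min_le_min (hphi true) le_rfl)
    simp only [Bool.not_false, Bool.not_true] at h0 h1'
    exact Nat.add_le_add h0 h1'
end
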